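/- With notation as above (UPB S, ρ the normalized projector onto H_S^⊥, H = Σ_i |α_i⟩⟨α_i|⊗|β_i⟩⟨β_i| − dε|Ψ⟩⟨Ψ|, and |Ψ⟩ maximally entangled with ⟨Ψ|ρ|Ψ⟩ > 0), one has Tr(Hρ) = −dε⟨Ψ|ρ|Ψ⟩ < 0. Hence H is an entanglement witness detecting ρ: Tr(Hρ) < 0 while Tr(H σ) ≥ 0 for all separable σ. -/

import Mathlib

open scoped BigOperators ComplexConjugate

noncomputable section

def inC {ι : Type*} [Fintype ι] (x y : ι → ℂ) : ℂ := ∑ i, conj (x i) * y i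

def prodVec {ι κ : Type*} (a : ι → ℂ) (b : κ → ℂ) : ι × κ → ℂ := fun p => a p.1 * b p.2

def outer {ι : Type*} (x : ι → ℂ) : Matrix ι ι ℂ := Matrix.vecMulVec x (star x)

def ONFam {σ ι : Type*} [DecidableEq σ] [Fintype ι] (f : σ → ι → ℂ) : Prop :=
  ∀ i j, inC (f i) (f j) = if i = j then 1 else 0

def IsUPB {σ ιA ιB : Type*} [DecidableEq σ] [Fintype σ] [Fintype ιA] [Fintype ιB]
    (α : σ → ιA → ℂ) (β : σ → ιB → ℂ) : Prop :=
  ONFam (fun i => prodVec (α i) (β i)) ∧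
  Submodule.span ℂ (Set.range fun i => prodVec (α i) (β i)) ≠ ⊤ ∧
  ∀ (a : ιA → ℂ) (b : ιB → ℂ), a ≠ 0 → b ≠ 0 →
    (∀ i, inC (prodVec (α i) (β i)) (prodVec a b) = 0) → False

def MaxEnt {m n : ℕ} (Ψ : Fin m × Fin n → ℂ) : Prop :=
  ∃ (a : Fin (min m n) → Fin m → ℂ) (b : Fin (min m n) → Fin n → ℂ),
    ONFam a ∧ ONFam b ∧
    Ψ = fun p => ((Real.sqrt (min m n) : ℝ) : ℂ)⁻¹ * (∑ i, prodVec (a i) (b i)) p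

/-- A separable state: a convex combination of unit pure product states. -/
def Separable {ιA ιB : Type*} [Fintype ιA] [Fintype ιB]
    (σ : Matrix (ιA × ιB) (ιA × ιB) ℂ) : Prop :=
  ∃ (k : ℕ) (p : Fin k → ℝ) (a : Fin k → ιA → ℂ) (b : Fin k → ιB → ℂ),
    (∀ i, 0 ≤ p i) ∧ (∀ i, inC (a i) (a i) = 1) ∧ (∀ i, inC (b i) (b i) = 1) ∧
    σ = ∑ i, (p i : ℂ) • outer (prodVec (a i) (b i))

/-!
The density operator `ρ` kills every vector `α i ⊗ β i` of the orthonormal UPB, so in `Tr (H ρ)`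
only the term `-d ε |Ψ⟩⟨Ψ|` survives. For a unit product vector `φ = x ⊗ y`,
`⟨φ|H|φ⟩ = ∑ i, |⟨x|α i⟩|² |⟨y|β i⟩|² - d ε |⟨φ|Ψ⟩|² ≥ ε - d ε |⟨φ|Ψ⟩|²`, and writing
`Ψ = d^(-1/2) ∑ i, u i ⊗ v i`, Cauchy–Schwarz and Bessel's inequality give `|⟨φ|Ψ⟩|² ≤ 1 / d`.
`Tr (H σ)` for separable `σ` is a nonnegative combination of such `⟨φ|H|φ⟩`.
-/

open Matrix

section InnerProduct

variable {ι κ : Type*} [Fintype ι] [Fintype κ]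

lemma inC_eq_star_dotProduct (x y : ι → ℂ) : inC x y = star x ⬝ᵥ y := rfl

lemma inC_eq_inner (x y : ι → ℂ) :
    inC x y = inner ℂ (WithLp.toLp 2 x : EuclideanSpace ℂ ι) (WithLp.toLp 2 y) := by
  rw [EuclideanSpace.inner_toLp_toLp, dotProduct_comm, inC_eq_star_dotProduct]

lemma inC_zero_right (x : ι → ℂ) : inC x 0 = 0 := dotProduct_zero _

lemma inC_sub_right (x y z : ι → ℂ) : inC x (y - z) = inC x y - inC x z := dotProduct_sub _ _ _

lemma inC_smul_right (x y : ι → ℂ) (c : ℂ) : inC x (c • y) = c * inC x y :=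
  dotProduct_smul _ _ _

lemma inC_sum_right {σ : Type*} (x : ι → ℂ) (f : σ → ι → ℂ) (s : Finset σ) :
    inC x (∑ i ∈ s, f i) = ∑ i ∈ s, inC x (f i) :=
  dotProduct_sum _ _ _

lemma inC_prodVec (a c : ι → ℂ) (b d : κ → ℂ) :
    inC (prodVec a b) (prodVec c d) = inC a c * inC b d := by
  simp only [inC, prodVec, Fintype.sum_prod_type, map_mul, Finset.sum_mul_sum]
  exact Finset.sum_congr rfl fun i _ => Finset.sum_congr rfl fun j _ => by ring

lemma ONFam.orthonormal {σ : Type*} [DecidableEq σ] {f : σ → ι → ℂ} (hf : ONFam f) :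
    Orthonormal ℂ fun i => (WithLp.toLp 2 (f i) : EuclideanSpace ℂ ι) :=
  orthonormal_iff_ite.mpr fun i j => by rw [← inC_eq_inner, hf]

lemma ONFam.sum_norm_inC_sq_le_one {σ : Type*} [DecidableEq σ] [Fintype σ] {f : σ → ι → ℂ}
    (hf : ONFam f) {x : ι → ℂ} (hx : inC x x = 1) : ∑ i, ‖inC x (f i)‖ ^ 2 ≤ 1 := by
  have hnorm : ‖(WithLp.toLp 2 x : EuclideanSpace ℂ ι)‖ ^ 2 = 1 := by
    rw [InnerProductSpace.norm_sq_eq_re_inner (𝕜 := ℂ), ← inC_eq_inner, hx, RCLike.one_re]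
  simpa only [inC_eq_inner, norm_inner_symm _ (WithLp.toLp 2 x), hnorm] using
    hf.orthonormal.sum_inner_products_le (s := Finset.univ) (x := WithLp.toLp 2 x)

end InnerProduct

lemma norm_sum_mul_sq_le {ι : Type*} [Fintype ι] (c d : ι → ℂ) :
    ‖∑ i, c i * d i‖ ^ 2 ≤ (∑ i, ‖c i‖ ^ 2) * ∑ i, ‖d i‖ ^ 2 := by
  calc ‖∑ i, c i * d i‖ ^ 2 ≤ (∑ i, ‖c i‖ * ‖d i‖) ^ 2 := by
        gcongr
        exact (norm_sum_le _ _).trans_eq (by simp only [norm_mul])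
    _ ≤ _ := Finset.sum_mul_sq_le_sq_mul_sq _ _ _

section Outer

variable {ι : Type*} [Fintype ι]

lemma outer_mulVec (x v : ι → ℂ) : outer x *ᵥ v = inC x v • x := by
  rw [outer, vecMulVec_mulVec, op_smul_eq_smul, inC_eq_star_dotProduct]

lemma trace_mul_outer (M : Matrix ι ι ℂ) (x : ι → ℂ) :
    (M * outer x).trace = inC x (M *ᵥ x) := by
  rw [outer, mul_vecMulVec, trace_vecMulVec, dotProduct_comm, inC_eq_star_dotProduct]

lemma inC_outer_mulVec_self (x v : ι → ℂ) :
    inC v (outer x *ᵥ v) = ((‖inC v x‖ ^ 2 : ℝ) : ℂ) := by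
  rw [outer_mulVec, inC_smul_right, inC_eq_star_dotProduct x, star_dotProduct,
    ← inC_eq_star_dotProduct]
  push_cast
  exact Complex.conj_mul' _

lemma ONFam.sum_outer_mulVec {σ : Type*} [DecidableEq σ] [Fintype σ] {f : σ → ι → ℂ}
    (hf : ONFam f) (i : σ) : (∑ j, outer (f j)) *ᵥ f i = f i := by
  simp only [sum_mulVec, outer_mulVec, hf _ i, ite_smul, one_smul, zero_smul,
    Finset.sum_ite_eq', Finset.mem_univ, if_true]

lemma re_inC_mulVec_sum_outer_sub_smul_outer {σ : Type*} [Fintype σ] (f : σ → ι → ℂ)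
    (g v : ι → ℂ) (c : ℝ) :
    (inC v ((∑ i, outer (f i) - (c : ℂ) • outer g) *ᵥ v)).re =
      ∑ i, ‖inC v (f i)‖ ^ 2 - c * ‖inC v g‖ ^ 2 := by
  simp only [sub_mulVec, sum_mulVec, smul_mulVec, inC_sub_right, inC_sum_right,
    inC_smul_right, inC_outer_mulVec_self, Complex.sub_re, Complex.re_sum, Complex.ofReal_re,
    Complex.re_ofReal_mul]

end Outer

lemma re_trace_mul_nonneg_of_separable {ιA ιB : Type*} [Fintype ιA] [Fintype ιB]
    {H σ : Matrix (ιA × ιB) (ιA × ιB) ℂ}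
    (hH : ∀ (x : ιA → ℂ) (y : ιB → ℂ), inC x x = 1 → inC y y = 1 →
      0 ≤ (inC (prodVec x y) (H *ᵥ prodVec x y)).re)
    (hσ : Separable σ) : 0 ≤ (H * σ).trace.re := by
  obtain ⟨k, p, a, b, hp, ha, hb, rfl⟩ := hσ
  rw [Finset.mul_sum, trace_sum, Complex.re_sum]
  refine Finset.sum_nonneg fun i _ => ?_
  rw [Matrix.mul_smul, trace_smul, smul_eq_mul, Complex.re_ofReal_mul, trace_mul_outer]
  exact mul_nonneg (hp i) (hH _ _ (ha i) (hb i))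

lemma ONFam.norm_sum_inC_mul_inC_sq_le_one {σ ιA ιB : Type*} [DecidableEq σ] [Fintype σ]
    [Fintype ιA] [Fintype ιB] {u : σ → ιA → ℂ} {v : σ → ιB → ℂ} (hu : ONFam u) (hv : ONFam v)
    {x : ιA → ℂ} {y : ιB → ℂ} (hx : inC x x = 1) (hy : inC y y = 1) :
    ‖∑ i, inC x (u i) * inC y (v i)‖ ^ 2 ≤ 1 :=
  (norm_sum_mul_sq_le _ _).trans <| mul_le_one₀ (hu.sum_norm_inC_sq_le_one hx)
    (Finset.sum_nonneg fun _ _ => sq_nonneg _) (hv.sum_norm_inC_sq_le_one hy)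

lemma MaxEnt.min_mul_norm_inC_prodVec_sq_le_one {m n : ℕ} {Ψ : Fin m × Fin n → ℂ}
    (hΨ : MaxEnt Ψ) {x : Fin m → ℂ} {y : Fin n → ℂ} (hx : inC x x = 1) (hy : inC y y = 1) :
    (min m n : ℝ) * ‖inC (prodVec x y) Ψ‖ ^ 2 ≤ 1 := by
  obtain ⟨u, v, hu, hv, rfl⟩ := hΨ
  have hexpand : inC (prodVec x y) (fun p => ((√(min m n : ℝ) : ℝ) : ℂ)⁻¹ *
      (∑ i, prodVec (u i) (v i)) p) =
      ((√(min m n : ℝ) : ℝ) : ℂ)⁻¹ * ∑ i, inC x (u i) * inC y (v i) := by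
    simp only [← smul_eq_mul, ← Pi.smul_def, inC_smul_right, inC_sum_right, inC_prodVec]
  have hd : (min m n : ℝ) * ‖((√(min m n : ℝ) : ℝ) : ℂ)⁻¹‖ ^ 2 ≤ 1 := by
    rw [norm_inv, Complex.norm_real, Real.norm_of_nonneg (Real.sqrt_nonneg _), inv_pow,
      Real.sq_sqrt (by positivity)]
    exact mul_inv_le_one
  rw [hexpand, norm_mul, mul_pow, ← mul_assoc]
  exact mul_le_one₀ hd (sq_nonneg _) (hu.norm_sum_inC_mul_inC_sq_le_one hv hx hy)

theorem witness_detects_upb_state_general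
    (m n s : ℕ) (hm : 0 < m) (hn : 0 < n)
    (α : Fin s → Fin m → ℂ) (β : Fin s → Fin n → ℂ)
    (hUPB : IsUPB α β)
    (ρ : Matrix (Fin m × Fin n) (Fin m × Fin n) ℂ)
    (hρ : ρ = ((m * n - s : ℕ) : ℂ)⁻¹ • (1 - ∑ i, outer (prodVec (α i) (β i))))
    (ε : ℝ) (hε : 0 < ε)
    (hεmin : ∀ (a : Fin m → ℂ) (b : Fin n → ℂ), inC a a = 1 → inC b b = 1 →
      ε ≤ ∑ i, ‖inC a (α i)‖ ^ 2 * ‖inC b (β i)‖ ^ 2)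
    (Ψ : Fin m × Fin n → ℂ) (hΨ : MaxEnt Ψ)
    (hΨρ : 0 < (inC Ψ (ρ.mulVec Ψ)).re)
    (H : Matrix (Fin m × Fin n) (Fin m × Fin n) ℂ)
    (hH : H = (∑ i, outer (prodVec (α i) (β i))) -
      (((min m n : ℝ) * ε : ℝ) : ℂ) • outer Ψ) :
    (H * ρ).trace = -((((min m n : ℝ) * ε : ℝ) : ℂ)) * inC Ψ (ρ.mulVec Ψ) ∧
    ((H * ρ).trace).re < 0 ∧
    ∀ σ : Matrix (Fin m × Fin n) (Fin m × Fin n) ℂ,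
      Separable σ → 0 ≤ ((H * σ).trace).re := by
  have hρ_upb : ∀ i, ρ *ᵥ prodVec (α i) (β i) = 0 := fun i => by
    rw [hρ, smul_mulVec, sub_mulVec, one_mulVec, hUPB.1.sum_outer_mulVec, sub_self, smul_zero]
  have htrace : (H * ρ).trace = -((((min m n : ℝ) * ε : ℝ) : ℂ)) * inC Ψ (ρ *ᵥ Ψ) := by
    simp only [hH, Matrix.sub_mul, Finset.sum_mul, Matrix.smul_mul, trace_sub, trace_sum,
      trace_smul, trace_mul_comm (outer _) ρ, trace_mul_outer, hρ_upb, inC_zero_right,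
      Finset.sum_const_zero, smul_eq_mul, zero_sub, neg_mul]
  have hd : 0 < min (m : ℝ) n := lt_min (Nat.cast_pos.mpr hm) (Nat.cast_pos.mpr hn)
  refine ⟨htrace, ?_, fun σ hσ => re_trace_mul_nonneg_of_separable (fun x y hx hy => ?_) hσ⟩
  · rw [htrace, neg_mul, Complex.neg_re, Complex.re_ofReal_mul, neg_lt_zero]
    exact mul_pos (mul_pos hd hε) hΨρ
  · rw [hH, re_inC_mulVec_sum_outer_sub_smul_outer]
    simp only [inC_prodVec, norm_mul, mul_pow]
    nlinarith [hεmin x y hx hy, hΨ.min_mul_norm_inC_prodVec_sq_le_one hx hy]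

/-- `Tr(Hρ) = −dε⟨Ψ|ρ|Ψ⟩ < 0`, while `Tr(Hσ) ≥ 0` for all
separable `σ`; so `H` is an entanglement witness detecting `ρ`. -/
theorem witness_detects_upb_state
    (m n s : ℕ) (hm : 0 < m) (hn : 0 < n)
    (α : Fin s → Fin m → ℂ) (β : Fin s → Fin n → ℂ)
    (hUPB : IsUPB α β) (hs : s < m * n)
    (ρ : Matrix (Fin m × Fin n) (Fin m × Fin n) ℂ)
    (hρ : ρ = ((m * n - s : ℕ) : ℂ)⁻¹ • (1 - ∑ i, outer (prodVec (α i) (β i))))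
    (ε : ℝ) (hε : 0 < ε)
    (hεmin : ∀ (a : Fin m → ℂ) (b : Fin n → ℂ), inC a a = 1 → inC b b = 1 →
      ε ≤ ∑ i, ‖inC a (α i)‖ ^ 2 * ‖inC b (β i)‖ ^ 2)
    (hεatt : ∃ (a : Fin m → ℂ) (b : Fin n → ℂ), inC a a = 1 ∧ inC b b = 1 ∧
      ε = ∑ i, ‖inC a (α i)‖ ^ 2 * ‖inC b (β i)‖ ^ 2)
    (Ψ : Fin m × Fin n → ℂ) (hΨ : MaxEnt Ψ)
    (hΨρ : 0 < (inC Ψ (ρ.mulVec Ψ)).re)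
    (H : Matrix (Fin m × Fin n) (Fin m × Fin n) ℂ)
    (hH : H = (∑ i, outer (prodVec (α i) (β i))) -
      (((min m n : ℝ) * ε : ℝ) : ℂ) • outer Ψ) :
    (H * ρ).trace = -((((min m n : ℝ) * ε : ℝ) : ℂ)) * inC Ψ (ρ.mulVec Ψ) ∧
    ((H * ρ).trace).re < 0 ∧
    ∀ σ : Matrix (Fin m × Fin n) (Fin m × Fin n) ℂ,
      Separable σ → 0 ≤ ((H * σ).trace).re :=
  witness_detects_upb_state_general m n s hm hn α β hUPB ρ hρ ε hε hεmin Ψ hΨ hΨρ H hH
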